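/- arXiv:1109.5345 — 7 statements merged into one kernel-verified Lean document; each statement's English description precedes it below -/
import Mathlib

section
/- Let G be a group, n a natural number, and P the free product of n copies of G. For all pairwise distinct i j k : Fin n and all g h : G, the partial conjugations φ(i,j,g) and φ(i,k,h) commute: φ(i,j,g) ∘ φ(i,k,h) = φ(i,k,h) ∘ φ(i,j,g) as monoid homomorphisms P →* P. -/
/-- `φ : P →* P` is the partial conjugation of the free product
`P = Monoid.CoprodI (fun _ : Fin n => G)` associated to `i j : Fin n` and `g : G`:
it sends `ι j x` to `(ι i g) * (ι j x) * (ι i g)⁻¹` and fixes `ι k x` for `k ≠ j`. -/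
def IsPartialConj {n : ℕ} {G : Type*} [Group G] (i j : Fin n) (g : G)
    (φ : Monoid.CoprodI (fun _ : Fin n => G) →* Monoid.CoprodI (fun _ : Fin n => G)) : Prop :=
  (∀ x : G, φ (Monoid.CoprodI.of (i := j) x) =
      Monoid.CoprodI.of (i := i) g * Monoid.CoprodI.of (i := j) x *
        (Monoid.CoprodI.of (i := i) g)⁻¹) ∧
  ∀ k : Fin n, k ≠ j → ∀ x : G,
      φ (Monoid.CoprodI.of (i := k) x) = Monoid.CoprodI.of (i := k) x

open Monoid.CoprodI

namespace IsPartialConj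

variable {n : ℕ} {G : Type*} [Group G] {i j : Fin n} {g : G}
  {φ ψ : Monoid.CoprodI (fun _ : Fin n => G) →* Monoid.CoprodI (fun _ : Fin n => G)}

theorem apply_comm_of_fixes (hφ : IsPartialConj i j g φ)
    (hψi : ∀ y : G, ψ (of (i := i) y) = of (i := i) y)
    (hψj : ∀ y : G, ψ (of (i := j) y) = of (i := j) y)
    (x : G) : ψ (φ (of (i := j) x)) = φ (ψ (of (i := j) x)) := by
  rw [hψj, hφ.1, map_mul, map_mul, map_inv, hψi, hψj]

end IsPartialConj

/-- For pairwise distinct `i j k` the partial conjugations `φ(i,j,g)` and `φ(i,k,h)`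
commute. -/
theorem partialConj_comm_same_base {n : ℕ} {G : Type*} [Group G] (i j k : Fin n)
    (hij : i ≠ j) (hik : i ≠ k) (hjk : j ≠ k) (g h : G)
    (φ₁ φ₂ : Monoid.CoprodI (fun _ : Fin n => G) →* Monoid.CoprodI (fun _ : Fin n => G))
    (h₁ : IsPartialConj i j g φ₁) (h₂ : IsPartialConj i k h φ₂) :
    φ₁.comp φ₂ = φ₂.comp φ₁ := by
  refine ext_hom _ _ fun l => MonoidHom.ext fun x => ?_
  simp only [MonoidHom.comp_apply]
  rcases eq_or_ne l j with rfl | hlj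
  · exact (h₁.apply_comm_of_fixes (h₂.2 _ hik) (h₂.2 _ hjk) x).symm
  rcases eq_or_ne l k with rfl | hlk
  · exact h₂.apply_comm_of_fixes (h₁.2 _ hij) (h₁.2 _ hlj) x
  · rw [h₂.2 _ hlk, h₁.2 _ hlj, h₂.2 _ hlk]
end

section
/- Let G be a group, n a natural number, and P the free product of n copies of G. For all pairwise distinct i j k l : Fin n and all g h : G, the partial conjugations φ(i,j,g) and φ(k,l,h) commute: φ(i,j,g) ∘ φ(k,l,h) = φ(k,l,h) ∘ φ(i,j,g) as monoid homomorphisms P →* P. -/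
namespace IsPartialConj

variable {n : ℕ} {G : Type*} [Group G] {i j : Fin n} {g : G}
  {φ : Monoid.CoprodI (fun _ : Fin n => G) →* Monoid.CoprodI (fun _ : Fin n => G)}

theorem apply_of_ne (hφ : IsPartialConj i j g φ) {m : Fin n} (hm : m ≠ j) (x : G) :
    φ (Monoid.CoprodI.of (i := m) x) = Monoid.CoprodI.of (i := m) x :=
  hφ.2 m hm x

theorem apply_conj_of_ne (hφ : IsPartialConj i j g φ) {a b : Fin n} (ha : a ≠ j) (hb : b ≠ j)
    (y x : G) :
    φ (Monoid.CoprodI.of (i := a) y * Monoid.CoprodI.of (i := b) x *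
        (Monoid.CoprodI.of (i := a) y)⁻¹) =
      Monoid.CoprodI.of (i := a) y * Monoid.CoprodI.of (i := b) x *
        (Monoid.CoprodI.of (i := a) y)⁻¹ := by
  rw [map_mul, map_mul, map_inv, hφ.apply_of_ne ha, hφ.apply_of_ne hb]

end IsPartialConj

theorem partialConj_comm_disjoint_general {n : ℕ} {G : Type*} [Group G] (i j k l : Fin n)
    (hil : i ≠ l) (hjk : j ≠ k) (hjl : j ≠ l)
    (g h : G)
    (φ₁ φ₂ : Monoid.CoprodI (fun _ : Fin n => G) →* Monoid.CoprodI (fun _ : Fin n => G))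
    (h₁ : IsPartialConj i j g φ₁) (h₂ : IsPartialConj k l h φ₂) :
    φ₁.comp φ₂ = φ₂.comp φ₁ := by
  refine Monoid.CoprodI.ext_hom _ _ fun m => MonoidHom.ext fun x => ?_
  simp only [MonoidHom.comp_apply]
  rcases eq_or_ne m j with rfl | hmj
  · rw [h₂.apply_of_ne hjl, h₁.1, h₂.apply_conj_of_ne hil hjl]
  rcases eq_or_ne m l with rfl | hml
  · rw [h₁.apply_of_ne hjl.symm, h₂.1, h₁.apply_conj_of_ne hjk.symm hjl.symm]
  rw [h₂.apply_of_ne hml, h₁.apply_of_ne hmj, h₂.apply_of_ne hml]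

/-- For pairwise distinct `i j k l` the partial conjugations `φ(i,j,g)` and `φ(k,l,h)`
commute. -/
theorem partialConj_comm_disjoint {n : ℕ} {G : Type*} [Group G] (i j k l : Fin n)
    (hij : i ≠ j) (hik : i ≠ k) (hil : i ≠ l) (hjk : j ≠ k) (hjl : j ≠ l) (hkl : k ≠ l)
    (g h : G)
    (φ₁ φ₂ : Monoid.CoprodI (fun _ : Fin n => G) →* Monoid.CoprodI (fun _ : Fin n => G))
    (h₁ : IsPartialConj i j g φ₁) (h₂ : IsPartialConj k l h φ₂) :
    φ₁.comp φ₂ = φ₂.comp φ₁ :=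
  partialConj_comm_disjoint_general i j k l hil hjk hjl g h φ₁ φ₂ h₁ h₂
end

section
/- Let V be a finite type and let (p, r) be a rooted tree on V, i.e. p : V → V with p r = r and every vertex reaches r under iteration of p. Let j : V be a vertex with p j ≠ r, set i := p j, and define p' := Function.update p j (p i) (remove the edge (i, j) and attach j to the parent of i). Then (p', r) is again a rooted tree on V (p' r = r and every vertex reaches r under iteration of p'), and the set of pairs (v, w) with v a proper ancestor of w with respect to p' is a strict subset of the corresponding set for p; in particular the level of the tree strictly decreases under this reduction. -/
/-!
Every step of `p' = update p j (p (p j))` is one or two steps of `p`, so each `p'`-iterate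
is a `p`-iterate of at least the same length. Hence `p'` still reaches the root and every
`p'`-ancestor is a `p`-ancestor. The pair `(p j, j)` is lost: `p'` sends `j` to `p (p j)`,
so reaching `p j` again from there would make `p j` a non-root periodic point of `p`.
-/

open Function

section

variable {α : Type*}

def properAncestorPairs (f : α → α) : Set (α × α) :=
  {q | q.1 ≠ q.2 ∧ ∃ k : ℕ, 1 ≤ k ∧ f^[k] q.2 = q.1}

theorem iterate_eq_of_iterate_eq_of_le {f : α → α} {r v : α} (hr : f r = r) {k m : ℕ}
    (hk : f^[k] v = r) (hkm : k ≤ m) : f^[m] v = r := by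
  rw [← Nat.sub_add_cancel hkm, iterate_add_apply, hk, iterate_fixed hr]

theorem not_isPeriodicPt_of_iterate_eq_fixedPt {f : α → α} {r v : α} (hr : f r = r)
    {K : ℕ} (hK : f^[K] v = r) (hv : v ≠ r) {t : ℕ} (ht : 0 < t) : ¬IsPeriodicPt f t v :=
  fun hper => hv <| (hper.mul_const K).eq.symm.trans <|
    iterate_eq_of_iterate_eq_of_le hr hK (Nat.le_mul_of_pos_left K ht)

theorem exists_le_iterate_update_apply_eq [DecidableEq α] (f : α → α) (j : α) (k : ℕ)
    (v : α) : ∃ m, k ≤ m ∧ (update f j (f (f j)))^[k] v = f^[m] v := by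
  induction k with
  | zero => exact ⟨0, le_rfl, rfl⟩
  | succ k ih =>
    obtain ⟨m, hkm, hm⟩ := ih
    rw [iterate_succ_apply', hm]
    by_cases hj : f^[m] v = j
    · refine ⟨m + 2, by omega, ?_⟩
      rw [hj, update_self, iterate_succ_apply', iterate_succ_apply', hj]
    · exact ⟨m + 1, by omega, by rw [update_of_ne hj, iterate_succ_apply']⟩

theorem properAncestorPairs_update_subset [DecidableEq α] (f : α → α) (j : α) :
    properAncestorPairs (update f j (f (f j))) ⊆ properAncestorPairs f := by
  rintro ⟨v, w⟩ ⟨hne, k, hk, hkw⟩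
  obtain ⟨m, hkm, hm⟩ := exists_le_iterate_update_apply_eq f j k w
  exact ⟨hne, m, hk.trans hkm, hm ▸ hkw⟩

theorem properAncestorPairs_update_ssubset [DecidableEq α] {f : α → α} {r : α}
    (hr : f r = r) (hreach : ∀ v, ∃ k, f^[k] v = r) {j : α} (hj : f j ≠ r) :
    properAncestorPairs (update f j (f (f j))) ⊂ properAncestorPairs f := by
  have hjr : j ≠ r := fun h => hj (h ▸ hr)
  refine Set.ssubset_iff_subset_ne.2 ⟨properAncestorPairs_update_subset f j, fun heq => ?_⟩
  have hfj : f j ≠ j := by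
    obtain ⟨K, hK⟩ := hreach j
    exact not_isPeriodicPt_of_iterate_eq_fixedPt hr hK hjr one_pos
  have hmem : (f j, j) ∈ properAncestorPairs f := ⟨hfj, 1, le_rfl, rfl⟩
  obtain ⟨-, k, hk, hkj⟩ := heq ▸ hmem
  obtain ⟨k, rfl⟩ := Nat.exists_eq_add_of_le' hk
  obtain ⟨m, -, hm⟩ := exists_le_iterate_update_apply_eq f j k (f (f j))
  rw [iterate_succ_apply, update_self, hm, ← iterate_succ_apply] at hkj
  obtain ⟨K, hK⟩ := hreach (f j)
  exact not_isPeriodicPt_of_iterate_eq_fixedPt hr hK hj m.succ_pos hkj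

end

/-- Removing the edge `(i, j)` (where `i = p j` is not the root) and attaching `j` to
the parent of `i` yields again a rooted tree, and the set of proper-ancestor pairs
strictly decreases; in particular the level of the tree strictly decreases. -/
theorem rootedTree_reduction {V : Type*} [Fintype V] [DecidableEq V] (r : V) (p : V → V)
    (hroot : p r = r) (hreach : ∀ v : V, ∃ k : ℕ, p^[k] v = r)
    (j : V) (hj : p j ≠ r) (p' : V → V) (hp' : p' = Function.update p j (p (p j))) :
    (p' r = r ∧ ∀ v : V, ∃ k : ℕ, p'^[k] v = r) ∧
    {q : V × V | q.1 ≠ q.2 ∧ ∃ k : ℕ, 1 ≤ k ∧ p'^[k] q.2 = q.1} ⊂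
      {q : V × V | q.1 ≠ q.2 ∧ ∃ k : ℕ, 1 ≤ k ∧ p^[k] q.2 = q.1} ∧
    {q : V × V | q.1 ≠ q.2 ∧ ∃ k : ℕ, 1 ≤ k ∧ p'^[k] q.2 = q.1}.ncard <
      {q : V × V | q.1 ≠ q.2 ∧ ∃ k : ℕ, 1 ≤ k ∧ p^[k] q.2 = q.1}.ncard := by
  subst hp'
  have hjr : j ≠ r := fun h => hj (h ▸ hroot)
  have hssub := properAncestorPairs_update_ssubset hroot hreach hj
  refine ⟨⟨(update_of_ne hjr.symm _ _).trans hroot, fun v => ?_⟩, hssub,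
    Set.ncard_lt_ncard hssub (Set.toFinite _)⟩
  obtain ⟨k, hk⟩ := hreach v
  obtain ⟨m, hkm, hm⟩ := exists_le_iterate_update_apply_eq p j k v
  exact ⟨k, hm.trans (iterate_eq_of_iterate_eq_of_le hroot hk hkm)⟩
end

section
/- Let V be a finite type, r : V, and Y a type with a distinguished basepoint •. Consider Y-labelled rooted trees T = (p, ℓ) on V with root r, where p : V → V is a rooted-tree parent map and ℓ : V → Y records the label of the edge from p v to v. Define the one-step reduction relation Red by: Red (p, ℓ) (p', ℓ') iff there exists j : V with p j ≠ r and ℓ j = •, and p' = Function.update p j (p (p j)), ℓ' = Function.update ℓ j (ℓ (p j)). Then for every Y-labelled rooted tree T on V with root r there exists a unique N such that T reduces to N by a (possibly empty) finite sequence of Red-steps and N admits no further Red-step; i.e. each Y-labelled tree has a unique irreducible normal form. -/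
/-! A slide moves a vertex whose incoming edge carries the basepoint one step towards the root,
so slides terminate: the sum of the depths of the vertices drops. Call a vertex blocked if its
label is not the basepoint or its parent is the root. Every vertex `v` ends up with the parent and
label of its first blocked ancestor (`v` itself included); this assignment is invariant under
slides and is the identity on irreducible trees, so all irreducible descendants of a tree agree. -/

namespace Relation

variable {α : Type*} {R : α → α → Prop}

theorem existsUnique_normalForm_of_invariant (I : α → Prop) (μ : α → ℕ) (nf : α → α)
    (hI : ∀ a b, R a b → I a → I b) (hμ : ∀ a b, R a b → I a → μ b < μ a)
    (hnf : ∀ a b, R a b → I a → nf b = nf a)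
    (hnf_self : ∀ a, (∀ b, ¬ R a b) → nf a = a)
    {a : α} (ha : I a) : ∃! n, ReflTransGen R a n ∧ ∀ b, ¬ R n b := by
  have reach : ∀ b, ReflTransGen R a b → I b ∧ nf b = nf a := by
    intro b hab
    induction hab with
    | refl => exact ⟨ha, rfl⟩
    | tail _ hbc ih => exact ⟨hI _ _ hbc ih.1, (hnf _ _ hbc ih.1).trans ih.2⟩
  obtain ⟨n, han, hmin⟩ := (measure μ).wf.has_min {b | ReflTransGen R a b} ⟨a, .refl⟩
  have hn : ∀ b, ¬ R n b := fun b hnb =>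
    hmin b (han.tail hnb) (hμ n b hnb (reach n han).1)
  refine ⟨n, ⟨han, hn⟩, fun m ⟨ham, hm⟩ => ?_⟩
  calc m = nf m := (hnf_self m hm).symm
    _ = nf a := (reach m ham).2
    _ = nf n := (reach n han).2.symm
    _ = n := hnf_self n hn

end Relation

namespace LabelledTree

open Function

variable {V Y : Type*}

def IsRooted (r : V) (p : V → V) : Prop :=
  p r = r ∧ ∀ v, ∃ k, p^[k] v = r

noncomputable def depth (r : V) (p : V → V) (v : V) : ℕ :=
  sInf {k | p^[k] v = r}

theorem iterate_eq_of_le {p : V → V} {r v : V} (hr : p r = r) {k i : ℕ} (hk : p^[k] v = r)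
    (hki : k ≤ i) : p^[i] v = r := by
  obtain ⟨d, rfl⟩ := Nat.exists_eq_add_of_le hki
  rw [add_comm, iterate_add_apply, hk, iterate_fixed hr]

theorem exists_le_iterate_eq {f g : V → V} (hg : ∀ u, g u = f u ∨ g u = f (f u)) (k : ℕ)
    (v : V) : ∃ i, k ≤ i ∧ g^[k] v = f^[i] v := by
  induction k with
  | zero => exact ⟨0, le_rfl, rfl⟩
  | succ k ih =>
    obtain ⟨i, hki, hi⟩ := ih
    rw [iterate_succ_apply', hi]
    rcases hg (f^[i] v) with h | h
    · exact ⟨i + 1, by omega, by rw [h, iterate_succ_apply']⟩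
    · exact ⟨i + 2, by omega, by rw [h, iterate_succ_apply', iterate_succ_apply']⟩

section Update

variable [DecidableEq V] {r : V} {p : V → V}

theorem update_eq_or_eq (p : V → V) (j u : V) :
    update p j (p (p j)) u = p u ∨ update p j (p (p j)) u = p (p u) := by
  by_cases hu : u = j
  · subst hu; simp
  · simp [hu]

theorem iterate_update_eq_root (hr : p r = r) (j : V) {k : ℕ} {v : V} (hk : p^[k] v = r) :
    (update p j (p (p j)))^[k] v = r := by
  obtain ⟨i, hki, hi⟩ := exists_le_iterate_eq (update_eq_or_eq p j) k v
  rw [hi, iterate_eq_of_le hr hk hki]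

theorem IsRooted.update (hp : IsRooted r p) (j : V) : IsRooted r (update p j (p (p j))) :=
  ⟨iterate_update_eq_root hp.1 j (k := 1) hp.1, fun v =>
    (hp.2 v).imp fun _ => iterate_update_eq_root hp.1 j⟩

theorem depth_update_le (hp : IsRooted r p) (j v : V) :
    depth r (update p j (p (p j))) v ≤ depth r p v :=
  Nat.sInf_le (iterate_update_eq_root hp.1 j (Nat.sInf_mem (hp.2 v)))

theorem depth_update_self_lt (hp : IsRooted r p) {j : V} (hj : p j ≠ r) :
    depth r (update p j (p (p j))) j < depth r p j := by
  have hd : p^[depth r p j] j = r := Nat.sInf_mem (hp.2 j)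
  obtain ⟨e, he⟩ : ∃ e, depth r p j = e + 2 := by
    match h : depth r p j with
    | 0 => rw [h, iterate_zero_apply] at hd; exact absurd (hd ▸ hp.1) hj
    | 1 => rw [h] at hd; exact absurd hd hj
    | e + 2 => exact ⟨e, rfl⟩
  obtain ⟨i, hei, hi⟩ := exists_le_iterate_eq (update_eq_or_eq p j) e (p (p j))
  have : (update p j (p (p j)))^[e + 1] j = r := by
    rw [iterate_succ_apply, update_self, hi, ← iterate_succ_apply, ← iterate_succ_apply]
    exact iterate_eq_of_le hp.1 hd (by omega)
  exact (Nat.sInf_le this).trans_lt (by omega)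

end Update

variable (r : V) (y0 : Y)

def Blocked (T : (V → V) × (V → Y)) (v : V) : Prop :=
  T.2 v ≠ y0 ∨ T.1 v = r

noncomputable def stopTime (T : (V → V) × (V → Y)) (v : V) : ℕ :=
  sInf {k | Blocked r y0 T (T.1^[k] v)}

noncomputable def stopEdge (T : (V → V) × (V → Y)) (v : V) : V × Y :=
  (T.1 (T.1^[stopTime r y0 T v] v), T.2 (T.1^[stopTime r y0 T v] v))

noncomputable def normalForm (T : (V → V) × (V → Y)) : (V → V) × (V → Y) :=
  (fun v => (stopEdge r y0 T v).1, fun v => (stopEdge r y0 T v).2)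

variable {r y0} {T : (V → V) × (V → Y)}

theorem stopEdge_of_blocked {v : V} (hv : Blocked r y0 T v) :
    stopEdge r y0 T v = (T.1 v, T.2 v) := by
  have : stopTime r y0 T v = 0 := Nat.sInf_eq_zero.mpr (Or.inl hv)
  simp [stopEdge, this]

theorem normalForm_eq_self (hT : ∀ v, Blocked r y0 T v) : normalForm r y0 T = T := by
  simp [normalForm, stopEdge_of_blocked (hT _)]

theorem stopTime_of_not_blocked (hT : IsRooted r T.1) {v : V} (hv : ¬ Blocked r y0 T v) :
    stopTime r y0 T v = stopTime r y0 T (T.1 v) + 1 := by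
  have hne : stopTime r y0 T v ≠ 0 := by
    obtain ⟨k, hk⟩ := hT.2 v
    rw [stopTime, Ne, Nat.sInf_eq_zero, not_or]
    exact ⟨hv, Set.nonempty_iff_ne_empty.mp ⟨k, Or.inr (hk ▸ hT.1)⟩⟩
  exact (Nat.sInf_add (p := fun k => Blocked r y0 T (T.1^[k] v))
    (Nat.one_le_iff_ne_zero.mpr hne)).symm

theorem stopEdge_of_not_blocked (hT : IsRooted r T.1) {v : V} (hv : ¬ Blocked r y0 T v) :
    stopEdge r y0 T v = stopEdge r y0 T (T.1 v) := by
  simp only [stopEdge, stopTime_of_not_blocked hT hv, iterate_succ_apply]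

section Slide

variable [DecidableEq V]

def slide (T : (V → V) × (V → Y)) (j : V) : (V → V) × (V → Y) :=
  (update T.1 j (T.1 (T.1 j)), update T.2 j (T.2 (T.1 j)))

variable (r y0) in
def SlideStep (T T' : (V → V) × (V → Y)) : Prop :=
  ∃ j, ¬ Blocked r y0 T j ∧ T' = slide T j

theorem slideStep_iff {T' : (V → V) × (V → Y)} :
    SlideStep r y0 T T' ↔ ∃ j, T.1 j ≠ r ∧ T.2 j = y0 ∧
      T'.1 = update T.1 j (T.1 (T.1 j)) ∧ T'.2 = update T.2 j (T.2 (T.1 j)) := by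
  simp only [SlideStep, Blocked, slide, Prod.ext_iff, not_or, not_not, and_assoc]
  exact exists_congr fun _ => and_left_comm

theorem IsRooted.slide (hT : IsRooted r T.1) (j : V) : IsRooted r (slide T j).1 :=
  hT.update j

theorem blocked_slide_self {j : V} : Blocked r y0 (slide T j) j ↔ Blocked r y0 T (T.1 j) := by
  simp [Blocked, slide]

theorem blocked_slide_of_ne {j v : V} (hvj : v ≠ j) :
    Blocked r y0 (slide T j) v ↔ Blocked r y0 T v := by
  simp [Blocked, slide, hvj]

theorem stopEdge_slide (hT : IsRooted r T.1) {j : V} (hj : ¬ Blocked r y0 T j) (v : V) :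
    stopEdge r y0 (slide T j) v = stopEdge r y0 T v := by
  have hT' := hT.slide j
  induction hn : stopTime r y0 T v using Nat.strong_induction_on generalizing v with
  | _ n ih =>
  by_cases hvj : v = j
  · subst hvj
    rw [stopEdge_of_not_blocked hT hj]
    by_cases hb : Blocked r y0 T (T.1 v)
    · rw [stopEdge_of_blocked hb, stopEdge_of_blocked (blocked_slide_self.2 hb)]
      simp [slide]
    · rw [stopEdge_of_not_blocked hT' (mt blocked_slide_self.1 hb), stopEdge_of_not_blocked hT hb,
        show (slide T v).1 v = T.1 (T.1 v) from update_self ..]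
      refine ih _ ?_ _ rfl
      rw [← hn, stopTime_of_not_blocked hT hj, stopTime_of_not_blocked hT hb]
      omega
  · by_cases hb : Blocked r y0 T v
    · rw [stopEdge_of_blocked hb, stopEdge_of_blocked ((blocked_slide_of_ne hvj).2 hb)]
      simp [slide, hvj]
    · rw [stopEdge_of_not_blocked hT' (mt (blocked_slide_of_ne hvj).1 hb),
        stopEdge_of_not_blocked hT hb, show (slide T j).1 v = T.1 v from update_of_ne hvj ..]
      refine ih _ ?_ _ rfl
      rw [← hn, stopTime_of_not_blocked hT hb]
      omega

theorem normalForm_slide (hT : IsRooted r T.1) {j : V} (hj : ¬ Blocked r y0 T j) :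
    normalForm r y0 (slide T j) = normalForm r y0 T := by
  simp only [normalForm, stopEdge_slide hT hj]

theorem sum_depth_slide_lt [Fintype V] (hT : IsRooted r T.1) {j : V} (hj : T.1 j ≠ r) :
    ∑ v, depth r (slide T j).1 v < ∑ v, depth r T.1 v :=
  Finset.sum_lt_sum (fun v _ => depth_update_le hT j v)
    ⟨j, Finset.mem_univ j, depth_update_self_lt hT hj⟩

theorem forall_blocked_of_irreducible (hT : ∀ T', ¬ SlideStep r y0 T T') (v : V) :
    Blocked r y0 T v :=
  by_contra fun hv => hT _ ⟨v, hv, rfl⟩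

end Slide

end LabelledTree

/-- Every `Y`-labelled rooted tree `(p, ℓ)` on a finite vertex set `V` with root `r`
has a unique irreducible normal form under the one-step reduction relation `Red`,
where `Red (p, ℓ) (p', ℓ')` holds iff there is a vertex `j` whose incoming edge is
labelled by the basepoint `y0` and whose parent `p j` is not the root, with
`p' = Function.update p j (p (p j))` and `ℓ' = Function.update ℓ j (ℓ (p j))`. -/
theorem labelledTree_unique_normal_form {V : Type*} [Fintype V] [DecidableEq V] (r : V)
    {Y : Type*} (y0 : Y)
    (Red : (V → V) × (V → Y) → (V → V) × (V → Y) → Prop)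
    (hRed : ∀ T T' : (V → V) × (V → Y), Red T T' ↔
      ∃ j : V, T.1 j ≠ r ∧ T.2 j = y0 ∧
        T'.1 = Function.update T.1 j (T.1 (T.1 j)) ∧
        T'.2 = Function.update T.2 j (T.2 (T.1 j)))
    (p : V → V) (ℓ : V → Y) (hroot : p r = r) (hreach : ∀ v : V, ∃ k : ℕ, p^[k] v = r) :
    ∃! N : (V → V) × (V → Y),
      Relation.ReflTransGen Red (p, ℓ) N ∧ ∀ N', ¬ Red N N' := by
  obtain rfl : Red = LabelledTree.SlideStep r y0 := by
    ext T T'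
    rw [hRed, LabelledTree.slideStep_iff]
  refine Relation.existsUnique_normalForm_of_invariant (fun T => LabelledTree.IsRooted r T.1)
    (fun T => ∑ v, LabelledTree.depth r T.1 v) (LabelledTree.normalForm r y0) ?_ ?_ ?_ ?_
    ⟨hroot, hreach⟩
  · rintro T _ ⟨j, -, rfl⟩ hT
    exact hT.slide j
  · rintro T _ ⟨j, hj, rfl⟩ hT
    exact LabelledTree.sum_depth_slide_lt hT fun h => hj (Or.inr h)
  · rintro T _ ⟨j, hj, rfl⟩ hT
    exact LabelledTree.normalForm_slide hT hj
  · exact fun T hT =>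
      LabelledTree.normalForm_eq_self (LabelledTree.forall_blocked_of_irreducible hT)
end

section
/- For every n ≥ 1, the number of functions p : Fin n → Fin n for which there exists r : Fin n with p r = r and such that for every v : Fin n some iterate p^[k] v equals r, is exactly n^(n-1). (Equivalently, the number of rooted labelled trees on n vertices, encoded by their parent maps, is n^(n-1).) -/
/-!
Joyal's proof. An endofunction `f` of `V` splits into its restriction to the set `C` of its
periodic points, which is a permutation of `C`, and the forest with root set `C` obtained by
making the points of `C` fixed. A rooted tree with a marked vertex `b` (a vertebrate) splits in
the same way along its spine, the path from `b` to the root: read from `b`, the spine is a linear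
order of its vertex set `C`, and the rest is again a forest with root set `C`. Since `C` has as
many permutations as linear orders, `|V| ^ |V| = |V| * #(rooted trees on V)`.
-/

open Function Set

variable {V : Type*}

namespace Function

theorem exists_iterate_mem_periodicPts [Finite V] (f : V → V) (v : V) :
    ∃ k, f^[k] v ∈ periodicPts f := by
  obtain ⟨i, j, hne, h⟩ := Finite.exists_ne_map_eq_of_infinite fun k : ℕ => f^[k] v
  wlog hij : i < j generalizing i j
  · exact this j i hne.symm h.symm (by omega)
  refine ⟨i, mk_mem_periodicPts (n := j - i) (by omega) ?_⟩
  rw [IsPeriodicPt, IsFixedPt, ← iterate_add_apply, Nat.sub_add_cancel hij.le, h]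

theorem range_iterate_subset_of_iterate_eq {f : V → V} {b : V} {i j : ℕ} (hij : i < j)
    (h : f^[i] b = f^[j] b) : range (f^[·] b) ⊆ (f^[·] b) '' Iio j := by
  rintro _ ⟨k, rfl⟩
  induction k using Nat.strong_induction_on with
  | _ k ih =>
    rcases lt_or_ge k j with hk | hk
    · exact ⟨k, hk, rfl⟩
    · have hshift : f^[k] b = f^[k - (j - i)] b := by
        rw [show k = k - j + j by omega, iterate_add_apply, ← h, ← iterate_add_apply]
        congr 1; omega
      simpa only [hshift] using ih _ (by omega)

theorem injOn_iterate_Iio_card_range [Finite V] (f : V → V) (b : V) :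
    InjOn (f^[·] b) (Iio (Nat.card (range (f^[·] b)))) := by
  have card_le : ∀ i j, i < j → f^[i] b = f^[j] b → Nat.card (range (f^[·] b)) ≤ j :=
    fun i j hij h => calc
      Nat.card (range (f^[·] b)) ≤ Nat.card ((f^[·] b) '' Iio j) :=
        Nat.card_mono (toFinite _) (range_iterate_subset_of_iterate_eq hij h)
      _ ≤ Nat.card (Iio j) := Nat.card_image_le (finite_Iio j)
      _ = j := by simp
  intro i hi j hj h
  rcases lt_trichotomy i j with hij | rfl | hij
  · exact absurd (card_le i j hij h) (not_le.2 hj)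
  · rfl
  · exact absurd (card_le j i hij h.symm) (not_le.2 hi)

theorem bijective_iterate_of_range_eq [Finite V] {f : V → V} {b : V} {C : Set V}
    (hC : range (f^[·] b) = C) :
    Bijective fun i : Fin (Nat.card C) => (⟨f^[i] b, hC ▸ mem_range_self (i : ℕ)⟩ : C) := by
  subst hC
  refine Injective.bijective_of_nat_card_le (fun i j h => Fin.ext ?_) (Nat.card_fin _).ge
  exact injOn_iterate_Iio_card_range f b i.2 j.2 (congrArg Subtype.val h)

theorem exists_iterate_mem_of_eqOn_compl {f g : V → V} {C : Set V} (hfg : EqOn f g Cᶜ) {v : V}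
    (hv : ∃ k, g^[k] v ∈ C) : ∃ k, f^[k] v ∈ C := by
  obtain ⟨k, hk⟩ := hv
  induction k generalizing v with
  | zero => exact ⟨0, hk⟩
  | succ k ih =>
    by_cases hvC : v ∈ C
    · exact ⟨0, hvC⟩
    obtain ⟨j, hj⟩ := ih (v := g v) hk
    exact ⟨j + 1, by rwa [iterate_succ_apply, hfg hvC]⟩

theorem mem_of_mem_periodicPts_of_mapsTo {f : V → V} {C : Set V} (hC : MapsTo f C C) {v : V}
    (hv : v ∈ periodicPts f) {k : ℕ} (hk : f^[k] v ∈ C) : v ∈ C := by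
  obtain ⟨t, ht, hper⟩ := hv
  have hreturn : f^[t * k - k] (f^[k] v) = v := by
    rw [← iterate_add_apply, Nat.sub_add_cancel (Nat.le_mul_of_pos_left k ht)]
    exact (hper.mul_const k).eq
  exact hreturn ▸ hC.iterate _ hk

theorem periodicPts_eq_of_injOn [Finite V] {f : V → V} {C : Set V} (hmaps : MapsTo f C C)
    (hinj : InjOn f C) (hreach : ∀ v, ∃ k, f^[k] v ∈ C) : periodicPts f = C := by
  refine Subset.antisymm
    (fun v hv => mem_of_mem_periodicPts_of_mapsTo hmaps hv (hreach v).choose_spec) fun c hc => ?_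
  obtain ⟨n, hn, hper⟩ := (hmaps.restrict_inj.2 hinj).mem_periodicPts ⟨c, hc⟩
  refine mk_mem_periodicPts hn ?_
  simpa [IsPeriodicPt, IsFixedPt, hmaps.iterate_restrict, Subtype.ext_iff] using hper

end Function

def graft (C : Set V) [DecidablePred (· ∈ C)] (q : C → V) (g : V → V) (v : V) : V :=
  if h : v ∈ C then q ⟨v, h⟩ else g v

section graft

variable {C : Set V} [DecidablePred (· ∈ C)] {q : C → V} {g : V → V}

theorem graft_of_mem {v : V} (hv : v ∈ C) : graft C q g v = q ⟨v, hv⟩ := by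
  rw [graft, dif_pos hv]

theorem graft_of_notMem {v : V} (hv : v ∉ C) : graft C q g v = g v := by
  rw [graft, dif_neg hv]

theorem eqOn_graft_compl : EqOn (graft C q g) g Cᶜ := fun _ hv => graft_of_notMem hv

end graft

def IsRootedTree (p : V → V) : Prop := ∃ r, p r = r ∧ ∀ v, ∃ k, p^[k] v = r

def IsRootedForest (g : V → V) (C : Set V) : Prop := (∀ c ∈ C, g c = c) ∧ ∀ v, ∃ k, g^[k] v ∈ C

theorem isRootedForest_piecewise {f : V → V} {C : Set V} [DecidablePred (· ∈ C)]
    (hf : ∀ v, ∃ k, f^[k] v ∈ C) : IsRootedForest (C.piecewise id f) C :=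
  ⟨fun _ hc => C.piecewise_eq_of_mem _ _ hc,
    fun v => exists_iterate_mem_of_eqOn_compl (C.piecewise_eqOn_compl _ _) (hf v)⟩

theorem IsRootedForest.piecewise_id_graft {C : Set V} {g : V → V} (hg : IsRootedForest g C)
    [DecidablePred (· ∈ C)] (q : C → V) : C.piecewise id (graft C q g) = g := by
  funext v
  by_cases hv : v ∈ C
  · rw [C.piecewise_eq_of_mem _ _ hv, hg.1 v hv, id]
  · rw [C.piecewise_eq_of_notMem _ _ hv, graft_of_notMem hv]

theorem IsRootedForest.nonempty [Nonempty V] {C : Set V} {g : V → V} (hg : IsRootedForest g C) :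
    C.Nonempty :=
  let ⟨_, hk⟩ := hg.2 (Classical.arbitrary V)
  ⟨_, hk⟩

noncomputable def periodicPtsFiberEquiv [Finite V] (C : Set V) [DecidablePred (· ∈ C)] :
    {f : V → V // periodicPts f = C} ≃ Equiv.Perm C × {g : V → V // IsRootedForest g C} where
  toFun f :=
    have hbij : BijOn f.1 C C := by simpa only [f.2] using bijOn_periodicPts f.1
    have hreach (v : V) : ∃ k, f.1^[k] v ∈ C := by
      simpa only [f.2] using exists_iterate_mem_periodicPts f.1 v
    (.ofBijective _ hbij.bijective, ⟨C.piecewise id f.1, isRootedForest_piecewise hreach⟩)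
  invFun σg := ⟨graft C (fun c => σg.1 c) σg.2.1,
    periodicPts_eq_of_injOn (fun c hc => by simp [graft_of_mem hc])
      (fun c hc d hd h => by
        rw [graft_of_mem hc, graft_of_mem hd] at h
        exact congrArg Subtype.val (σg.1.injective (Subtype.ext h)))
      fun v => exists_iterate_mem_of_eqOn_compl eqOn_graft_compl (σg.2.2.2 v)⟩
  left_inv f := by
    ext v
    by_cases hv : v ∈ C
    · simp [graft_of_mem hv]
    · simp [graft_of_notMem hv, hv]
  right_inv σg := by
    ext c
    · simp [graft_of_mem c.2]
    · simp [σg.2.2.piecewise_id_graft]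

def spine (x : V × {p : V → V // IsRootedTree p}) : Set V := range (x.2.1^[·] x.1)

theorem IsRootedTree.exists_iterate_mem_range {p : V → V} (hp : IsRootedTree p) (b v : V) :
    ∃ k, p^[k] v ∈ range (p^[·] b) := by
  obtain ⟨r, -, hreach⟩ := hp
  obtain ⟨k, hk⟩ := hreach v
  exact ⟨k, hk ▸ hreach b⟩

theorem IsRootedTree.apply_iterate_card_range_sub_one [Finite V] {p : V → V}
    (hp : IsRootedTree p) (b : V) :
    p (p^[Nat.card (range (p^[·] b)) - 1] b) = p^[Nat.card (range (p^[·] b)) - 1] b := by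
  obtain ⟨r, hr, hreach⟩ := hp
  set m := Nat.card (range (p^[·] b))
  obtain ⟨i, hi⟩ := (bijective_iterate_of_range_eq rfl).2 ⟨p^[m] b, mem_range_self m⟩
  have hi : p^[i] b = p^[m] b := congrArg Subtype.val hi
  have hperiodic : p^[i] b ∈ periodicPts p := by
    refine mk_mem_periodicPts (n := m - i) (by omega) ?_
    rw [IsPeriodicPt, IsFixedPt, ← iterate_add_apply, Nat.sub_add_cancel i.2.le, hi]
  have hroot : p^[i] b = r :=
    mem_of_mem_periodicPts_of_mapsTo (mapsTo_singleton.2 hr) hperiodic (hreach _).choose_spec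
  have hlast : (i : ℕ) = m - 1 := by
    by_contra hne
    have := injOn_iterate_Iio_card_range p b i.2 (show (i : ℕ) + 1 < m by omega)
      (by dsimp only; rw [iterate_succ_apply', hroot, hr])
    omega
  rw [← hlast, hroot, hr]

section path

variable {C : Set V} {m : ℕ} (e : Fin m ≃ C) (hm : 0 < m)

def pathPoint (i : ℕ) : V := e ⟨min i (m - 1), by omega⟩

theorem pathPoint_min (i : ℕ) : pathPoint e hm (min i (m - 1)) = pathPoint e hm i := by
  simp only [pathPoint, min_assoc, min_self]

theorem pathPoint_mem (i : ℕ) : pathPoint e hm i ∈ C := (e _).2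

theorem pathPoint_val (i : Fin m) : pathPoint e hm i = e i := by
  simp [pathPoint, Nat.le_sub_one_of_lt i.2]

theorem pathPoint_zero : pathPoint e hm 0 = e ⟨0, hm⟩ := pathPoint_val e hm ⟨0, hm⟩

theorem pathPoint_symm {c : V} (hc : c ∈ C) : pathPoint e hm (e.symm ⟨c, hc⟩) = c := by
  rw [pathPoint_val, Equiv.apply_symm_apply]

variable [DecidablePred (· ∈ C)] (g : V → V)

/-- The rooted tree with spine `e 0 → e 1 → ⋯ → e (m - 1)`, whose other edges are those of `g`. -/
def pathParent : V → V := graft C (fun c => pathPoint e hm (e.symm c + 1)) g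

theorem pathParent_pathPoint (i : ℕ) :
    pathParent e hm g (pathPoint e hm i) = pathPoint e hm (i + 1) := by
  rw [pathParent, graft_of_mem (pathPoint_mem e hm i)]
  simp only [pathPoint, Subtype.coe_eta, Equiv.symm_apply_apply]
  congr 3; omega

theorem pathParent_eq {p : V → V} (hpath : ∀ i, p (pathPoint e hm i) = pathPoint e hm (i + 1))
    (hoff : EqOn p g Cᶜ) : pathParent e hm g = p := by
  funext v
  by_cases hv : v ∈ C
  · rw [← pathPoint_symm e hm hv, pathParent_pathPoint, hpath]
  · rw [pathParent, graft_of_notMem hv, hoff hv]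

theorem iterate_pathParent_pathPoint (k i : ℕ) :
    (pathParent e hm g)^[k] (pathPoint e hm i) = pathPoint e hm (i + k) := by
  induction k with
  | zero => rfl
  | succ k ih => rw [iterate_succ_apply', ih, pathParent_pathPoint, add_assoc]

theorem range_iterate_pathParent :
    range ((pathParent e hm g)^[·] (pathPoint e hm 0)) = C := by
  simp only [iterate_pathParent_pathPoint, zero_add]
  refine Subset.antisymm (range_subset_iff.2 (pathPoint_mem e hm)) fun c hc => ?_
  exact ⟨e.symm ⟨c, hc⟩, pathPoint_symm e hm hc⟩

theorem isRootedTree_pathParent {g : V → V} (hg : ∀ v, ∃ k, g^[k] v ∈ C) :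
    IsRootedTree (pathParent e hm g) := by
  refine ⟨pathPoint e hm (m - 1), ?_, fun v => ?_⟩
  · rw [pathParent_pathPoint, ← pathPoint_min, Nat.min_eq_right (by omega)]
  obtain ⟨k, hk⟩ :=
    exists_iterate_mem_of_eqOn_compl (f := pathParent e hm g) eqOn_graft_compl (hg v)
  refine ⟨(m - 1) + k, ?_⟩
  rw [iterate_add_apply, ← pathPoint_symm e hm hk, iterate_pathParent_pathPoint,
    ← pathPoint_min, ← pathPoint_min (i := m - 1)]
  congr 1; omega

end path

noncomputable def spineFiberEquiv [Finite V] [Nonempty V] (C : Set V) [DecidablePred (· ∈ C)] :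
    {x : V × {p : V → V // IsRootedTree p} // spine x = C} ≃
      (Fin (Nat.card C) ≃ C) × {g : V → V // IsRootedForest g C} where
  toFun x :=
    (.ofBijective _ (bijective_iterate_of_range_eq x.2),
      ⟨C.piecewise id x.1.2.1, isRootedForest_piecewise fun v =>
        (x.1.2.2.exists_iterate_mem_range x.1.1 v).imp fun _ hk => x.2.subset hk⟩)
  invFun eg :=
    have : Nonempty C := eg.2.2.nonempty.to_subtype
    have hm : 0 < Nat.card C := Nat.card_pos
    ⟨(pathPoint eg.1 hm 0, ⟨pathParent eg.1 hm eg.2.1, isRootedTree_pathParent eg.1 hm eg.2.2.2⟩),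
      range_iterate_pathParent eg.1 hm eg.2.1⟩
  left_inv := by
    rintro ⟨⟨b, p, hp⟩, hx⟩
    subst hx
    dsimp only
    refine Subtype.ext (Prod.ext ?_ (Subtype.ext ?_))
    · dsimp only
      exact pathPoint_zero _ _
    refine pathParent_eq _ _ _ (fun i => ?_) (piecewise_eqOn_compl _ _ _).symm
    show p (p^[min i _] b) = p^[min (i + 1) _] b
    rcases lt_or_ge (i + 1) (Nat.card (spine (b, ⟨p, hp⟩))) with hi | hi
    · rw [min_eq_left (by omega), min_eq_left (by omega), iterate_succ_apply']
    · rw [min_eq_right (by omega), min_eq_right (by omega)]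
      exact hp.apply_iterate_card_range_sub_one b
  right_inv := by
    rintro ⟨e, g, hg⟩
    dsimp only
    refine Prod.ext (Equiv.ext fun i => Subtype.ext ?_) (Subtype.ext ?_)
    · simp only [iterate_pathParent_pathPoint, zero_add, pathPoint_val, Equiv.ofBijective_apply]
    · simp [pathParent, hg.piecewise_id_graft]

theorem card_endofunctions_eq_card_vertebrates [Finite V] [Nonempty V] :
    Nat.card (V → V) = Nat.card (V × {p : V → V // IsRootedTree p}) := by
  classical
  have := Fintype.ofFinite V
  rw [← Nat.card_congr (Equiv.sigmaFiberEquiv periodicPts),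
    ← Nat.card_congr (Equiv.sigmaFiberEquiv spine), Nat.card_sigma, Nat.card_sigma]
  refine Fintype.sum_congr _ _ fun C => ?_
  rw [Nat.card_congr (periodicPtsFiberEquiv C), Nat.card_congr (spineFiberEquiv C), Nat.card_prod,
    Nat.card_prod, Nat.card_congr ((Finite.equivFin C).equivCongr (Equiv.refl C))]

/-- Cayley's formula, in terms of parent maps: for `n ≥ 1`, the number of maps
`p : Fin n → Fin n` admitting a root `r` with `p r = r` such that every vertex
reaches `r` under iteration of `p` is exactly `n ^ (n - 1)`. -/
theorem card_rooted_labelled_trees (n : ℕ) (hn : 1 ≤ n) :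
    Nat.card {p : Fin n → Fin n // ∃ r : Fin n, p r = r ∧ ∀ v : Fin n, ∃ k : ℕ, p^[k] v = r} =
      n ^ (n - 1) := by
  have : Nonempty (Fin n) := ⟨⟨0, hn⟩⟩
  have h := card_endofunctions_eq_card_vertebrates (V := Fin n)
  rw [Nat.card_prod, Nat.card_fun, Nat.card_fin] at h
  apply Nat.eq_of_mul_eq_mul_left hn
  calc n * Nat.card _ = n ^ n := h.symm
    _ = n * n ^ (n - 1) := by rw [← pow_succ', Nat.sub_add_cancel hn]
end

section
/- Let k be a field and A a two-dimensional k-vector space equipped with a k-bilinear multiplication satisfying the Perm-algebra identities (x*y)*z = x*(y*z) and x*(y*z) = x*(z*y) for all x, y, z, and suppose the multiplication is not commutative. Then there exists a basis (a, b) of A with multiplication table a*a = a, a*b = 0, b*b = 0, b*a = b; i.e. every two-dimensional noncommutative Perm-algebra over k is isomorphic to this algebra. -/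
/-!
Right commutativity makes every commutator `c = x * y - y * x` a left annihilator: `z * c = 0`
for all `z`. Completing `c ≠ 0` to a basis `(u, c)`, bilinearity shows that every commutator is
a multiple of `c * u`, hence `c * u = μ • c` with `μ ≠ 0`. Associativity of `u * u * u` and of
`c * u * u` then forces `u * u = μ • u`, so `(μ⁻¹ • u, c)` has the required multiplication table.
-/

open Module

theorem LinearIndependent.span_pair_eq_top_of_finrank_eq_two {k V : Type*} [Field k]
    [AddCommGroup V] [Module k V] {x y : V} (hxy : LinearIndependent k ![x, y])
    (hdim : finrank k V = 2) :
    Submodule.span k {x, y} = ⊤ := by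
  have hspan := hxy.span_eq_top_of_card_eq_finrank (by simp [hdim])
  rwa [Matrix.range_cons, Matrix.range_cons, Matrix.range_empty, Set.union_empty,
    Set.singleton_union] at hspan

theorem mul_commutator_eq_zero {A : Type*} [NonUnitalNonAssocRing A]
    (hrcomm : ∀ x y z : A, x * (y * z) = x * (z * y)) (x y z : A) :
    z * (x * y - y * x) = 0 := by
  rw [mul_sub, hrcomm, sub_self]

section PermAlgebra

variable {k A : Type*} [Field k] [NonUnitalRing A] [Module k A] [IsScalarTower k A A]
  [SMulCommClass k A A]

theorem commutator_eq_smul_of_forall_mul_eq_zero {u c : A} (hc : ∀ z : A, z * c = 0)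
    (p q r s : k) :
    (p • u + q • c) * (r • u + s • c) - (r • u + s • c) * (p • u + q • c) =
      (q * r - p * s) • (c * u) := by
  simp only [add_mul, mul_add, smul_mul_assoc, mul_smul_comm, hc]
  module

theorem exists_mul_eq_smul_of_eq_commutator {u c x y : A}
    (hspan : Submodule.span k {u, c} = ⊤) (hc : ∀ z : A, z * c = 0) (hc0 : c ≠ 0)
    (hxy : c = x * y - y * x) : ∃ μ : k, μ ≠ 0 ∧ c * u = μ • c := by
  obtain ⟨p, q, rfl⟩ := Submodule.mem_span_pair.mp (hspan ▸ Submodule.mem_top : x ∈ _)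
  obtain ⟨r, s, rfl⟩ := Submodule.mem_span_pair.mp (hspan ▸ Submodule.mem_top : y ∈ _)
  rw [commutator_eq_smul_of_forall_mul_eq_zero hc] at hxy
  have ht : q * r - p * s ≠ 0 := by
    rintro ht
    rw [ht, zero_smul] at hxy
    exact hc0 hxy
  refine ⟨(q * r - p * s)⁻¹, inv_ne_zero ht, ?_⟩
  rw [hxy, smul_smul, inv_mul_cancel₀ ht, one_smul, ← hxy]

theorem mul_self_eq_smul_of_mul_eq_smul {u c : A} {μ : k}
    (hspan : Submodule.span k {u, c} = ⊤) (hc : ∀ z : A, z * c = 0) (hc0 : c ≠ 0)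
    (hμ : μ ≠ 0) (hcu : c * u = μ • c) : u * u = μ • u := by
  obtain ⟨α, β, huu⟩ := Submodule.mem_span_pair.mp (hspan ▸ Submodule.mem_top : u * u ∈ _)
  have hβ : β = 0 := by
    have h := mul_assoc u u u
    rw [← huu, add_mul, mul_add, smul_mul_assoc, smul_mul_assoc, mul_smul_comm, mul_smul_comm,
      hc, smul_zero, add_zero, hcu, smul_smul, add_eq_left, smul_eq_zero] at h
    simpa [hμ, hc0] using h
  rw [hβ, zero_smul, add_zero] at huu
  have hα : α = μ := by
    have h := mul_assoc c u u
    rw [← huu, hcu, smul_mul_assoc, mul_smul_comm, hcu, smul_smul, smul_smul] at h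
    exact mul_right_cancel₀ hμ (smul_left_injective k hc0 h).symm
  rw [← huu, hα]

theorem exists_basis_mul_table_of_finrank_eq_two (hdim : finrank k A = 2)
    (hrcomm : ∀ x y z : A, x * (y * z) = x * (z * y)) (hnc : ∃ x y : A, x * y ≠ y * x) :
    ∃ a b : A, LinearIndependent k ![a, b] ∧ Submodule.span k {a, b} = ⊤ ∧
      a * a = a ∧ a * b = 0 ∧ b * b = 0 ∧ b * a = b := by
  obtain ⟨x, y, hxy⟩ := hnc
  set c := x * y - y * x with hc_def
  have hc0 : c ≠ 0 := sub_ne_zero.mpr hxy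
  have hc : ∀ z : A, z * c = 0 := mul_commutator_eq_zero hrcomm x y
  obtain ⟨u, hcu_indep⟩ := exists_linearIndependent_pair_of_one_lt_finrank (R := k) (by omega) hc0
  have huc_indep := LinearIndependent.pair_symm_iff.mp hcu_indep
  have hspan := huc_indep.span_pair_eq_top_of_finrank_eq_two hdim
  obtain ⟨μ, hμ, hcu⟩ := exists_mul_eq_smul_of_eq_commutator hspan hc hc0 hc_def
  have huu := mul_self_eq_smul_of_mul_eq_smul hspan hc hc0 hμ hcu
  have hac_indep : LinearIndependent k ![μ⁻¹ • u, c] := by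
    simpa using (LinearIndependent.pair_smul_smul_iff (isUnit_iff_ne_zero.mpr (inv_ne_zero hμ))
      isUnit_one).mpr huc_indep
  refine ⟨μ⁻¹ • u, c, hac_indep, hac_indep.span_pair_eq_top_of_finrank_eq_two hdim,
    ?_, hc _, hc c, ?_⟩
  · rw [smul_mul_assoc, mul_smul_comm, huu, smul_smul, smul_smul, mul_assoc, inv_mul_cancel₀ hμ,
      mul_one]
  · rw [mul_smul_comm, hcu, smul_smul, inv_mul_cancel₀ hμ, one_smul]

end PermAlgebra

/-- Every two-dimensional noncommutative Perm-algebra over a field `k` has a basis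
`(a, b)` with multiplication table `a*a = a`, `a*b = 0`, `b*b = 0`, `b*a = b`. -/
theorem two_dim_noncomm_perm_algebra {k A : Type*} [Field k] [AddCommGroup A] [Module k A]
    [Mul A]
    (hdim : Module.finrank k A = 2)
    (hadd_left : ∀ x y z : A, (x + y) * z = x * z + y * z)
    (hadd_right : ∀ x y z : A, x * (y + z) = x * y + x * z)
    (hsmul_left : ∀ (c : k) (x y : A), (c • x) * y = c • (x * y))
    (hsmul_right : ∀ (c : k) (x y : A), x * (c • y) = c • (x * y))
    (hassoc : ∀ x y z : A, (x * y) * z = x * (y * z))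
    (hrcomm : ∀ x y z : A, x * (y * z) = x * (z * y))
    (hnc : ∃ x y : A, x * y ≠ y * x) :
    ∃ a b : A, LinearIndependent k ![a, b] ∧ Submodule.span k {a, b} = ⊤ ∧
      a * a = a ∧ a * b = 0 ∧ b * b = 0 ∧ b * a = b := by
  let _ : NonUnitalRing A :=
    { ‹AddCommGroup A›, ‹Mul A› with
      left_distrib := hadd_right
      right_distrib := hadd_left
      zero_mul := fun x => by simpa using hsmul_left 0 0 x
      mul_zero := fun x => by simpa using hsmul_right 0 x 0
      mul_assoc := hassoc }
  have : IsScalarTower k A A := ⟨hsmul_left⟩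
  have : SMulCommClass k A A := ⟨fun c x y => (hsmul_right c x y).symm⟩
  exact exists_basis_mul_table_of_finrank_eq_two hdim hrcomm hnc
end

section
/- Let T be the formal power series over ℚ whose constant coefficient is 0 and whose coefficient of X^n is n^(n−1)/n! for every n ≥ 1 (the exponential generating function of rooted labelled trees). Then T satisfies the functional equation T = X · exp(T), where exp(T) denotes the substitution of T into the exponential power series Σ_{m≥0} X^m/m! (well-defined since T has zero constant term). Equivalently, the power series T(−X) is inverse to −X·exp(−X) under composition. -/
/-!
The coefficient of `X^n` in `T(X e^{-X})` is `(1/n!) Σ_m (-1)^(n-m) C(n,m) m^(n-1)`, an `n`-th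
finite difference of a polynomial of degree `n - 1`, hence zero for `n ≥ 2`. So `T` is a left
compositional inverse of `X e^{-X}`; as `X e^{-X}` has linear coefficient `1` it has a two-sided
inverse, which must then be `T`. Hence `T e^{-T} = X`, i.e. `T = X e^T`, and the claims about
`T(-X)` follow by substituting `-X`.
-/

open PowerSeries Finset

/-- Formal composition `f ∘ g` of power series over `ℚ` (the correct substitution of `g`
into `f` whenever `g` has zero constant coefficient): the coefficient of `X^n` only
involves `Σ_{m ≤ n} (coeff m f) · g^m`, since `g^m` has order at least `m`. -/
noncomputable def psComp (f g : PowerSeries ℚ) : PowerSeries ℚ :=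
  PowerSeries.mk fun n =>
    PowerSeries.coeff n
      (∑ m ∈ Finset.range (n + 1), PowerSeries.C (PowerSeries.coeff m f) * g ^ m)

namespace PowerSeries

variable {R : Type*} [CommRing R]

theorem coeff_pow_eq_zero_of_lt {f : R⟦X⟧} (hf : constantCoeff f = 0) {n m : ℕ} (h : n < m) :
    coeff n (f ^ m) = 0 :=
  coeff_of_lt_order n ((Nat.cast_lt.mpr h).trans_le (le_order_pow_of_constantCoeff_eq_zero m hf))

theorem coeff_subst_eq_sum_range (f : R⟦X⟧) {g : R⟦X⟧} (hg : constantCoeff g = 0) (n : ℕ) :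
    coeff n (f.subst g) = ∑ m ∈ range (n + 1), coeff m f * coeff n (g ^ m) := by
  rw [coeff_subst' (HasSubst.of_constantCoeff_zero' hg)]
  refine finsum_eq_sum_of_support_subset _ fun m hm => ?_
  rw [coe_range, Set.mem_Iio, Nat.lt_succ_iff]
  by_contra! hnm
  exact hm (by simp only [coeff_pow_eq_zero_of_lt hg hnm, smul_zero])

theorem subst_neg {a : R⟦X⟧} (ha : HasSubst a) (f : R⟦X⟧) : (-f).subst a = -f.subst a := by
  rw [← coe_substAlgHom ha, map_neg]

theorem subst_eq_X_of_subst_eq_X {f g : R⟦X⟧} (hg : constantCoeff g = 0)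
    (hg₁ : IsUnit (coeff 1 g)) (h : f.subst g = X) : g.subst f = X := by
  have hg' : HasSubst (g.substInvOfIsUnit hg₁) := HasSubst.substInvOfIsUnit g hg₁
  have hf_eq : f = g.substInvOfIsUnit hg₁ := calc
    f = f.subst (g.subst (g.substInvOfIsUnit hg₁)) := by
      rw [subst_substInvOfIsUnit_right g hg hg₁, X_subst]
    _ = g.substInvOfIsUnit hg₁ := by
      rw [← subst_comp_subst_apply (HasSubst.of_constantCoeff_zero' hg) hg', h, subst_X hg']
  rw [hf_eq, subst_substInvOfIsUnit_right g hg hg₁]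

end PowerSeries

theorem sum_range_neg_one_pow_mul_choose_mul_pow_eq_zero {R : Type*} [CommRing R] {j n : ℕ}
    (h : j < n) : ∑ k ∈ range (n + 1), (-1 : R) ^ (n - k) * n.choose k * (k : R) ^ j = 0 := by
  have := congr_fun (fwdDiff_iter_pow_eq_zero_of_lt (R := R) h) 0
  rw [fwdDiff_iter_eq_sum_shift] at this
  simpa [zsmul_eq_mul] using this

theorem psComp_eq_subst (f : ℚ⟦X⟧) {g : ℚ⟦X⟧} (hg : constantCoeff g = 0) :
    psComp f g = f.subst g := by
  ext n
  simp only [psComp, coeff_mk, map_sum, coeff_C_mul, coeff_subst_eq_sum_range f hg]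

theorem coeff_X_mul_exp_neg_pow {m n : ℕ} (hmn : m ≤ n) :
    coeff n ((X * rescale (-1) (exp ℚ)) ^ m) = (-m : ℚ) ^ (n - m) / (n - m).factorial := by
  rw [mul_pow, ← map_pow, exp_pow_eq_rescale_exp, rescale_rescale, coeff_X_pow_mul', if_pos hmn,
    coeff_rescale, coeff_exp]
  simp [div_eq_mul_inv, mul_comm]

theorem pow_pred_div_factorial_mul_neg_pow_div_factorial {m n : ℕ} (hm : 1 ≤ m) (hmn : m ≤ n) :
    (m : ℚ) ^ (m - 1) / m.factorial * ((-m : ℚ) ^ (n - m) / (n - m).factorial) =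
      (-1) ^ (n - m) * n.choose m * (m : ℚ) ^ (n - 1) / n.factorial := by
  obtain ⟨k, rfl⟩ := Nat.exists_eq_add_of_le hmn
  obtain ⟨j, rfl⟩ := Nat.exists_eq_add_of_le' hm
  rw [Nat.cast_choose ℚ hmn, Nat.add_sub_cancel_left, Nat.add_sub_cancel, neg_pow,
    show j + 1 + k - 1 = j + k by omega, pow_add]
  field_simp

section Tree

variable {T : ℚ⟦X⟧} (h0 : constantCoeff T = 0)
  (hT : ∀ n : ℕ, 1 ≤ n → coeff n T = (n : ℚ) ^ (n - 1) / n.factorial)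
include h0 hT

theorem tree_subst_X_mul_exp_neg : T.subst (X * rescale (-1) (exp ℚ)) = X := by
  ext n
  rw [coeff_subst_eq_sum_range T (by simp)]
  rcases lt_or_ge n 2 with hn | hn
  · interval_cases n
    · simp [h0]
    · simp [sum_range_succ, h0, hT]
  have hterm : ∀ m ∈ range (n + 1), coeff m T * coeff n ((X * rescale (-1) (exp ℚ)) ^ m) =
      (-1) ^ (n - m) * n.choose m * (m : ℚ) ^ (n - 1) / n.factorial := by
    intro m hm
    have hmn : m ≤ n := Nat.lt_succ_iff.mp (mem_range.mp hm)
    rw [coeff_X_mul_exp_neg_pow hmn]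
    rcases Nat.eq_zero_or_pos m with rfl | hm0
    · simp [h0, zero_pow (show n - 1 ≠ 0 by omega)]
    · rw [hT m hm0, pow_pred_div_factorial_mul_neg_pow_div_factorial hm0 hmn]
  rw [sum_congr rfl hterm, ← sum_div, sum_range_neg_one_pow_mul_choose_mul_pow_eq_zero (by omega),
    zero_div, coeff_X, if_neg (by omega)]

theorem X_mul_exp_neg_subst_tree : (X * rescale (-1) (exp ℚ)).subst T = X :=
  subst_eq_X_of_subst_eq_X (by simp) (by simp [coeff_exp]) (tree_subst_X_mul_exp_neg h0 hT)

theorem tree_eq_X_mul_exp_subst : T = X * (exp ℚ).subst T := by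
  have hT' : HasSubst T := HasSubst.of_constantCoeff_zero' h0
  have hinv : (rescale (-1) (exp ℚ)).subst T * (exp ℚ).subst T = 1 := by
    rw [← subst_mul hT', mul_comm, ← coe_substAlgHom hT']
    exact (congrArg _ (exp_mul_exp_neg_eq_one (A := ℚ))).trans (map_one _)
  calc T = T * ((rescale (-1) (exp ℚ)).subst T * (exp ℚ).subst T) := by rw [hinv, mul_one]
    _ = (X * rescale (-1) (exp ℚ)).subst T * (exp ℚ).subst T := by
      rw [subst_mul hT', subst_X hT', mul_assoc]
    _ = X * (exp ℚ).subst T := by rw [X_mul_exp_neg_subst_tree h0 hT]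

end Tree

/-- The exponential generating function `T` of rooted labelled trees, with coefficients
`n^(n−1)/n!` for `n ≥ 1` and zero constant coefficient, satisfies the functional
equation `T = X · exp(T)`; equivalently, `T(−X)` is inverse to `−X·exp(−X)` under
composition. -/
theorem tree_series_functional_equation (T : PowerSeries ℚ)
    (h0 : PowerSeries.constantCoeff T = 0)
    (hT : ∀ n : ℕ, 1 ≤ n →
      PowerSeries.coeff n T = (n : ℚ) ^ (n - 1) / (n.factorial : ℚ)) :
    T = PowerSeries.X * psComp (PowerSeries.exp ℚ) T ∧
    psComp (PowerSeries.rescale (-1) T)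
        (-(PowerSeries.X * PowerSeries.rescale (-1) (PowerSeries.exp ℚ))) =
      PowerSeries.X ∧
    psComp (-(PowerSeries.X * PowerSeries.rescale (-1) (PowerSeries.exp ℚ)))
        (PowerSeries.rescale (-1) T) =
      PowerSeries.X := by
  have hT' : HasSubst T := HasSubst.of_constantCoeff_zero' h0
  have hneg : HasSubst ((-1 : ℚ) • X : ℚ⟦X⟧) := HasSubst.smul_X' _
  have hV0 : constantCoeff (-(X * rescale (-1) (exp ℚ))) = 0 := by simp
  have hV : HasSubst (-(X * rescale (-1) (exp ℚ))) := HasSubst.of_constantCoeff_zero' hV0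
  have hU0 : constantCoeff (rescale (-1) T) = 0 := by
    rw [← coeff_zero_eq_constantCoeff_apply, coeff_rescale, coeff_zero_eq_constantCoeff_apply, h0,
      mul_zero]
  refine ⟨?_, ?_, ?_⟩
  · rw [psComp_eq_subst _ h0]
    exact tree_eq_X_mul_exp_subst h0 hT
  · rw [psComp_eq_subst _ hV0, rescale_eq_subst (-1) T, subst_comp_subst_apply hneg hV,
      subst_smul hV, subst_X hV, neg_smul, one_smul, neg_neg]
    exact tree_subst_X_mul_exp_neg h0 hT
  · rw [psComp_eq_subst _ hU0, rescale_eq_subst (-1) T, ← subst_comp_subst_apply hT' hneg,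
      subst_neg hT', X_mul_exp_neg_subst_tree h0 hT, subst_neg hneg, subst_X hneg, neg_smul,
      one_smul, neg_neg]
end
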